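/- arXiv:2201.02502 — 2 statements merged into one kernel-verified Lean document; each statement's English description precedes it below -/
import Mathlib

section
/- Let Γ be an edge-separated CLTTF graph on V. Then the chunk graph Ch_Γ is a tree, and every leaf (vertex of degree one) of Ch_Γ is a chunk of Γ; hence Ch_Γ is called the chunk tree of Γ. -/
open scoped Classical

namespace CLTTF

structure LGraph (V : Type) where
  edges : Set (Sym2 V)
  label : Sym2 V → ℤ

variable {V : Type} [Fintype V] [DecidableEq V]

def LGraph.Good (G : LGraph V) : Prop :=
  (∀ e ∈ G.edges, ¬ e.IsDiag) ∧ ∀ e, e ∉ G.edges → G.label e = 0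

def LGraph.toSimple (G : LGraph V) : SimpleGraph V where
  Adj u v := u ≠ v ∧ s(u, v) ∈ G.edges
  symm := by
    constructor
    intro u v h
    exact ⟨h.1.symm, by rw [Sym2.eq_swap]; exact h.2⟩
  loopless := by
    constructor
    intro v h
    exact h.1 rfl

structure IsCLTTF (G : LGraph V) : Prop where
  good : G.Good
  connected : G.toSimple.Connected
  large : ∀ e ∈ G.edges, 3 ≤ G.label e
  triangle_free : G.toSimple.CliqueFree 3

structure IsDecomp (G : LGraph V) (S₀ S₁ S₂ : Set V) : Prop where
  union_eq : S₁ ∪ S₂ = Set.univ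
  inter_eq : S₁ ∩ S₂ = S₀
  ne₁ : S₁ ≠ S₀
  ne₂ : S₂ ≠ S₀
  edge_cond : ∀ e ∈ G.edges, (∀ v ∈ e, v ∈ S₁) ∨ (∀ v ∈ e, v ∈ S₂)

def IsSepEdge (G : LGraph V) (e : Sym2 V) : Prop :=
  e ∈ G.edges ∧ ∃ S₁ S₂ : Set V, IsDecomp G {v | v ∈ e} S₁ S₂

def HasSepVertex (G : LGraph V) : Prop :=
  ∃ (v : V) (S₁ S₂ : Set V), IsDecomp G {v} S₁ S₂

def EdgeSeparated (G : LGraph V) : Prop := ¬ HasSepVertex G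

def ConnFull (G : LGraph V) (S : Set V) : Prop :=
  ((G.toSimple).induce S).Connected

def Indecomposable (G : LGraph V) (S : Set V) : Prop :=
  ∀ e ∈ G.edges, ∀ S₁ S₂ : Set V, IsDecomp G {v | v ∈ e} S₁ S₂ → S ⊆ S₁ ∨ S ⊆ S₂

def IsChunk (G : LGraph V) (S : Set V) : Prop :=
  ConnFull G S ∧ Indecomposable G S ∧
    ∀ T : Set V, ConnFull G T → Indecomposable G T → S ⊆ T → S = T

abbrev ChunkVert (G : LGraph V) : Type :=
  {S : Set V // IsChunk G S} ⊕ {e : Sym2 V // IsSepEdge G e}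

def chunkGraph (G : LGraph V) : SimpleGraph (ChunkVert G) where
  Adj x y :=
    (∃ C e, x = Sum.inl C ∧ y = Sum.inr e ∧ {v | v ∈ e.1} ⊆ C.1) ∨
    (∃ C e, x = Sum.inr e ∧ y = Sum.inl C ∧ {v | v ∈ e.1} ⊆ C.1)
  symm := by
    constructor
    rintro x y (⟨C, e, rfl, rfl, h⟩ | ⟨C, e, rfl, rfl, h⟩)
    · exact Or.inr ⟨C, e, rfl, rfl, h⟩
    · exact Or.inl ⟨C, e, rfl, rfl, h⟩
  loopless := by
    constructor
    rintro x (⟨C, e, rfl, h, -⟩ | ⟨C, e, rfl, h, -⟩) <;> exact absurd h (by simp)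

def IsCenter (G : LGraph V) (x : ChunkVert G) : Prop :=
  ∀ y : ChunkVert G, 2 * (chunkGraph G).dist x y ≤ (chunkGraph G).diam

def LGraph.map (a : Equiv.Perm V) (G : LGraph V) : LGraph V :=
  ⟨Sym2.map a '' G.edges, fun f => G.label (Sym2.map a.symm f)⟩

noncomputable def twMap (s t : V) (S₂ : Set V) (f : Sym2 V) : Sym2 V :=
  if h : ∃ v, v ∈ S₂ ∧ v ≠ s ∧ v ≠ t ∧ f = s(v, s) then s(h.choose, t)
  else if h' : ∃ v, v ∈ S₂ ∧ v ≠ s ∧ v ≠ t ∧ f = s(v, t) then s(h'.choose, s)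
  else f

noncomputable def LGraph.twist (G : LGraph V) (s t : V) (S₂ : Set V) : LGraph V :=
  if Even (G.label s(s, t)) then G
  else ⟨twMap s t S₂ '' G.edges, fun f => G.label (twMap s t S₂ f)⟩

noncomputable def twistEdgeMap (G : LGraph V) (s t : V) (S₂ : Set V) : Sym2 V → Sym2 V :=
  if Even (G.label s(s, t)) then id else twMap s t S₂

def TwistStep (G Δ : LGraph V) : Prop :=
  ∃ (s t : V) (S₁ S₂ : Set V),
    s(s, t) ∈ G.edges ∧ IsDecomp G {s, t} S₁ S₂ ∧ Δ = G.twist s t S₂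

def TwistEquiv (G Δ : LGraph V) : Prop := Relation.ReflTransGen TwistStep G Δ

def side1 (G : LGraph V) (e : Sym2 V) (C : Set V) : Set V :=
  {v | ∃ (he : IsSepEdge G e) (hC : IsChunk G C) (D : Set V) (hD : IsChunk G D),
    v ∈ D ∧
    ((chunkGraph G).deleteEdges
      {s((Sum.inr ⟨e, he⟩ : ChunkVert G), Sum.inl ⟨C, hC⟩)}).Reachable
      (Sum.inr ⟨e, he⟩) (Sum.inl ⟨D, hD⟩)}

def side2 (G : LGraph V) (e : Sym2 V) (C : Set V) : Set V :=
  {v | ∃ (he : IsSepEdge G e) (hC : IsChunk G C) (D : Set V) (hD : IsChunk G D),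
    v ∈ D ∧
    ((chunkGraph G).deleteEdges
      {s((Sum.inr ⟨e, he⟩ : ChunkVert G), Sum.inl ⟨C, hC⟩)}).Reachable
      (Sum.inl ⟨C, hC⟩) (Sum.inl ⟨D, hD⟩)}

noncomputable def pt1 (e : Sym2 V) : V := (Quot.out e).1
noncomputable def pt2 (e : Sym2 V) : V := (Quot.out e).2

noncomputable def twistCh (G : LGraph V) (e : Sym2 V) (C : Set V) : LGraph V :=
  G.twist (pt1 e) (pt2 e) (side2 G e C)

def IsOutward (G : LGraph V) (e : Sym2 V) (C : Set V) : Prop :=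
  ∃ (he : IsSepEdge G e) (hC : IsChunk G C),
    {v | v ∈ e} ⊆ C ∧
    ∀ x : ChunkVert G, IsCenter G x →
      (chunkGraph G).dist x (Sum.inr ⟨e, he⟩) < (chunkGraph G).dist x (Sum.inl ⟨C, hC⟩)

noncomputable def applyTwists (G : LGraph V) (l : List (Sym2 V × Set V)) : LGraph V :=
  l.foldl (fun H p => twistCh H p.1 p.2) G

def Rigid (G : LGraph V) : Prop :=
  ∀ Δ : LGraph V, TwistEquiv G Δ → ∃ a : Equiv.Perm V, LGraph.map a G = Δ

def DiscretelyRigid (G : LGraph V) : Prop :=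
  ∀ Δ : LGraph V, TwistEquiv G Δ → (∃ a : Equiv.Perm V, LGraph.map a G = Δ) → Δ = G

def IsoSet (G : LGraph V) : Set (Equiv.Perm V) :=
  {a | TwistEquiv G (LGraph.map a G)}

end CLTTF

namespace CLTTF

variable {V : Type} [Fintype V] [DecidableEq V]

def altProd {M : Type} [Monoid M] : M → M → ℕ → M
  | _, _, 0 => 1
  | a, b, n + 1 => a * altProd b a n

def artinRels (G : LGraph V) : Set (FreeGroup V) :=
  {r | ∃ u w : V, s(u, w) ∈ G.edges ∧
    r = altProd (FreeGroup.of u) (FreeGroup.of w) (G.label s(u, w)).toNat *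
        (altProd (FreeGroup.of w) (FreeGroup.of u) (G.label s(u, w)).toNat)⁻¹}

abbrev ArtinGroup (G : LGraph V) : Type := PresentedGroup (artinRels G)

def agen (G : LGraph V) (v : V) : ArtinGroup G := PresentedGroup.of v

noncomputable def xe (G : LGraph V) (e : Sym2 V) : ArtinGroup G :=
  altProd (agen G (pt1 e)) (agen G (pt2 e)) (G.label e).toNat

def PermHomSpec (G Δ : LGraph V) (a : Equiv.Perm V)
    (φ : ArtinGroup G →* ArtinGroup Δ) : Prop :=
  ∀ v : V, φ (agen G v) = agen Δ (a v)

def PConjSpec (G Δ : LGraph V) (e : Sym2 V) (S₁ : Set V)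
    (φ : ArtinGroup G →* ArtinGroup Δ) : Prop :=
  ∀ v : V, (v ∈ S₁ → φ (agen G v) = agen Δ v) ∧
    (v ∉ S₁ → φ (agen G v) = (xe Δ e)⁻¹ * agen Δ v * xe Δ e)

inductive ChainPC (G : LGraph V) : ∀ Δ : LGraph V, (ArtinGroup G →* ArtinGroup Δ) → Prop
  | nil : ChainPC G G (MonoidHom.id (ArtinGroup G))
  | fwd {Δ : LGraph V} {φ : ArtinGroup G →* ArtinGroup Δ} (e : Sym2 V) (C : Set V)
      (f : ArtinGroup Δ →* ArtinGroup (twistCh Δ e C)) :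
      ChainPC G Δ φ → IsOutward Δ e C →
      PConjSpec Δ (twistCh Δ e C) e (side1 Δ e C) f →
      ChainPC G (twistCh Δ e C) (f.comp φ)
  | bwd (Λ : LGraph V) (e : Sym2 V) (C : Set V)
      {φ : ArtinGroup G →* ArtinGroup (twistCh Λ e C)}
      (f : ArtinGroup Λ →* ArtinGroup (twistCh Λ e C))
      (g : ArtinGroup (twistCh Λ e C) →* ArtinGroup Λ) :
      ChainPC G (twistCh Λ e C) φ → IsOutward Λ e C →
      PConjSpec Λ (twistCh Λ e C) e (side1 Λ e C) f →
      g.comp f = MonoidHom.id (ArtinGroup Λ) →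
      f.comp g = MonoidHom.id (ArtinGroup (twistCh Λ e C)) →
      ChainPC G Λ (g.comp φ)

inductive ChainA (G : LGraph V) : ∀ Δ : LGraph V, (ArtinGroup G →* ArtinGroup Δ) → Prop
  | nil : ChainA G G (MonoidHom.id (ArtinGroup G))
  | fwd {Δ : LGraph V} {φ : ArtinGroup G →* ArtinGroup Δ} (e : Sym2 V) (C : Set V)
      (f : ArtinGroup Δ →* ArtinGroup (twistCh Δ e C)) :
      ChainA G Δ φ → IsOutward Δ e C →
      PConjSpec Δ (twistCh Δ e C) e (side1 Δ e C) f →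
      ChainA G (twistCh Δ e C) (f.comp φ)
  | bwd (Λ : LGraph V) (e : Sym2 V) (C : Set V)
      {φ : ArtinGroup G →* ArtinGroup (twistCh Λ e C)}
      (f : ArtinGroup Λ →* ArtinGroup (twistCh Λ e C))
      (g : ArtinGroup (twistCh Λ e C) →* ArtinGroup Λ) :
      ChainA G (twistCh Λ e C) φ → IsOutward Λ e C →
      PConjSpec Λ (twistCh Λ e C) e (side1 Λ e C) f →
      g.comp f = MonoidHom.id (ArtinGroup Λ) →
      f.comp g = MonoidHom.id (ArtinGroup (twistCh Λ e C)) →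
      ChainA G Λ (g.comp φ)
  | iso {Δ : LGraph V} {φ : ArtinGroup G →* ArtinGroup Δ} (a : Equiv.Perm V)
      (f : ArtinGroup Δ →* ArtinGroup (LGraph.map a Δ)) :
      ChainA G Δ φ → PermHomSpec Δ (LGraph.map a Δ) a f →
      ChainA G (LGraph.map a Δ) (f.comp φ)

inductive ChainFull (G : LGraph V) : ∀ Δ : LGraph V, (ArtinGroup G →* ArtinGroup Δ) → Prop
  | nil : ChainFull G G (MonoidHom.id (ArtinGroup G))
  | fwd {Δ : LGraph V} {φ : ArtinGroup G →* ArtinGroup Δ} (e : Sym2 V) (C : Set V)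
      (f : ArtinGroup Δ →* ArtinGroup (twistCh Δ e C)) :
      ChainFull G Δ φ → IsOutward Δ e C →
      PConjSpec Δ (twistCh Δ e C) e (side1 Δ e C) f →
      ChainFull G (twistCh Δ e C) (f.comp φ)
  | bwd (Λ : LGraph V) (e : Sym2 V) (C : Set V)
      {φ : ArtinGroup G →* ArtinGroup (twistCh Λ e C)}
      (f : ArtinGroup Λ →* ArtinGroup (twistCh Λ e C))
      (g : ArtinGroup (twistCh Λ e C) →* ArtinGroup Λ) :
      ChainFull G (twistCh Λ e C) φ → IsOutward Λ e C →
      PConjSpec Λ (twistCh Λ e C) e (side1 Λ e C) f →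
      g.comp f = MonoidHom.id (ArtinGroup Λ) →
      f.comp g = MonoidHom.id (ArtinGroup (twistCh Λ e C)) →
      ChainFull G Λ (g.comp φ)
  | iso {Δ : LGraph V} {φ : ArtinGroup G →* ArtinGroup Δ} (a : Equiv.Perm V)
      (f : ArtinGroup Δ →* ArtinGroup (LGraph.map a Δ)) :
      ChainFull G Δ φ → PermHomSpec Δ (LGraph.map a Δ) a f →
      ChainFull G (LGraph.map a Δ) (f.comp φ)
  | inn {Δ : LGraph V} {φ : ArtinGroup G →* ArtinGroup Δ} (g : ArtinGroup Δ) :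
      ChainFull G Δ φ → ChainFull G Δ ((MulAut.conj g).toMonoidHom.comp φ)

inductive ChainPCc (G : LGraph V) :
    ∀ Δ : LGraph V, (ArtinGroup G →* ArtinGroup Δ) → ((Sym2 V × Set V) → ℤ) → Prop
  | nil : ChainPCc G G (MonoidHom.id (ArtinGroup G)) (fun _ => 0)
  | fwd {Δ : LGraph V} {φ : ArtinGroup G →* ArtinGroup Δ} {c : (Sym2 V × Set V) → ℤ}
      (e : Sym2 V) (C : Set V)
      (f : ArtinGroup Δ →* ArtinGroup (twistCh Δ e C)) :
      ChainPCc G Δ φ c → IsOutward Δ e C →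
      PConjSpec Δ (twistCh Δ e C) e (side1 Δ e C) f →
      ChainPCc G (twistCh Δ e C) (f.comp φ) (fun p => c p + if p = (e, C) then 1 else 0)
  | bwd (Λ : LGraph V) (e : Sym2 V) (C : Set V)
      {φ : ArtinGroup G →* ArtinGroup (twistCh Λ e C)} {c : (Sym2 V × Set V) → ℤ}
      (f : ArtinGroup Λ →* ArtinGroup (twistCh Λ e C))
      (g : ArtinGroup (twistCh Λ e C) →* ArtinGroup Λ) :
      ChainPCc G (twistCh Λ e C) φ c → IsOutward Λ e C →
      PConjSpec Λ (twistCh Λ e C) e (side1 Λ e C) f →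
      g.comp f = MonoidHom.id (ArtinGroup Λ) →
      f.comp g = MonoidHom.id (ArtinGroup (twistCh Λ e C)) →
      ChainPCc G Λ (g.comp φ) (fun p => c p - if p = (e, C) then 1 else 0)

def InnA (G : LGraph V) : Subgroup (MulAut (ArtinGroup G)) :=
  (MulAut.conj : ArtinGroup G →* MulAut (ArtinGroup G)).range

instance innA_normal (G : LGraph V) : (InnA G).Normal := by
  constructor
  rintro n ⟨x, rfl⟩ g
  refine ⟨g x, ?_⟩
  ext y
  simp [MulAut.conj_apply, mul_assoc, MulAut.mul_apply]

def PositiveAut (G : LGraph V) (F : MulAut (ArtinGroup G)) : Prop :=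
  ∀ v : V, ∃ w : V,
    Abelianization.of (F (agen G v)) = Abelianization.of (agen G w)

def ZSet (G : LGraph V) : Set (MulAut (ArtinGroup G)) :=
  {F | (F = 1 ∧ ∃ (C : Set V) (hC : IsChunk G C), IsCenter G (Sum.inl ⟨C, hC⟩)) ∨
       (∃ (e : Sym2 V) (he : IsSepEdge G e), IsCenter G (Sum.inr ⟨e, he⟩) ∧
         ∃ k : ℤ, F = (MulAut.conj (xe G e)) ^ k)}

end CLTTF

namespace CLTTF

variable {V : Type} [Fintype V] [DecidableEq V]

noncomputable def xeF (G : LGraph V) (e : Sym2 V) : FreeGroup V :=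
  altProd (FreeGroup.of (pt1 e)) (FreeGroup.of (pt2 e)) (G.label e).toNat

noncomputable def pconjWord (G : LGraph V) (e : Sym2 V) (C : Set V) :
    FreeGroup V →* FreeGroup V :=
  FreeGroup.lift fun v =>
    if v ∈ side1 G e C then FreeGroup.of v
    else (xeF G e)⁻¹ * FreeGroup.of v * xeF G e

noncomputable def applyPConjs (G : LGraph V) (l : List (Sym2 V × Set V))
    (w : FreeGroup V) : FreeGroup V :=
  l.foldr (fun p acc => pconjWord G p.1 p.2 acc) w

def oddOutSet (G : LGraph V) : Set (Sym2 V × Set V) :=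
  {p | IsOutward G p.1 p.2 ∧ Odd (G.label p.1)}

noncomputable def etaFinset (G : LGraph V) (a : Equiv.Perm V) :
    Finset (Sym2 V × Set V) :=
  if h : ∃ s : Finset (Sym2 V × Set V),
      (∀ p ∈ s, p ∈ oddOutSet G) ∧ applyTwists G s.toList = LGraph.map a G
  then h.choose else ∅

noncomputable def alphaActWord (G : LGraph V) (a : Equiv.Perm V) (v : V) : FreeGroup V :=
  applyPConjs G (etaFinset G a).toList (FreeGroup.of (a v))

abbrev OutEven (G : LGraph V) : Type :=
  {p : Sym2 V × Set V // IsOutward G p.1 p.2 ∧ Even (G.label p.1)}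

abbrev OutOdd (G : LGraph V) : Type :=
  {p : Sym2 V × Set V // IsOutward G p.1 p.2 ∧ Odd (G.label p.1)}

abbrev IsoPerm (G : LGraph V) : Type :=
  {a : Equiv.Perm V // TwistEquiv G (LGraph.map a G)}

abbrev GenO (G : LGraph V) : Type := (OutEven G ⊕ OutOdd G) ⊕ (IsoPerm G ⊕ Unit)

abbrev GenA (G : LGraph V) : Type := V ⊕ GenO G

noncomputable def genActWord (G : LGraph V) : GenO G → V → FreeGroup V
  | Sum.inl (Sum.inl p), v => pconjWord G p.1.1 p.1.2 (FreeGroup.of v)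
  | Sum.inl (Sum.inr p), v => pconjWord G p.1.1 p.1.2 (pconjWord G p.1.1 p.1.2 (FreeGroup.of v))
  | Sum.inr (Sum.inl a), v => alphaActWord G a.1 v
  | Sum.inr (Sum.inr _), v => (FreeGroup.of v)⁻¹

def EpsGenWords (G : LGraph V) : Set (FreeGroup (GenO G)) :=
  {w | (∃ p : OutEven G, w = FreeGroup.of (Sum.inl (Sum.inl p))) ∨
       (∃ p : OutOdd G, w = FreeGroup.of (Sum.inl (Sum.inr p)))}

noncomputable def wEps (G : LGraph V) (p : Sym2 V × Set V) : FreeGroup (GenO G) :=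
  if h : IsOutward G p.1 p.2 ∧ Even (G.label p.1) then
    FreeGroup.of (Sum.inl (Sum.inl ⟨p, h⟩)) else 1

noncomputable def wEps2 (G : LGraph V) (p : Sym2 V × Set V) : FreeGroup (GenO G) :=
  if h : IsOutward G p.1 p.2 ∧ Odd (G.label p.1) then
    FreeGroup.of (Sum.inl (Sum.inr ⟨p, h⟩)) else 1

noncomputable def wAlpha (G : LGraph V) (a : Equiv.Perm V) : FreeGroup (GenO G) :=
  if h : TwistEquiv G (LGraph.map a G) then
    FreeGroup.of (Sum.inr (Sum.inl ⟨a, h⟩)) else 1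

def wIota (G : LGraph V) : FreeGroup (GenO G) := FreeGroup.of (Sum.inr (Sum.inr ()))

def R1 (G : LGraph V) : Set (FreeGroup (GenO G)) :=
  {r | ∃ w ∈ EpsGenWords G, ∃ w' ∈ EpsGenWords G, r = w * w' * w⁻¹ * w'⁻¹}

def R2 (G : LGraph V) : Set (FreeGroup (GenO G)) :=
  {r | ∃ (a : IsoPerm G) (p : OutEven G),
    r = FreeGroup.of (Sum.inr (Sum.inl a)) * FreeGroup.of (Sum.inl (Sum.inl p)) *
        (FreeGroup.of (Sum.inr (Sum.inl a)))⁻¹ *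
        (wEps G (Sym2.map a.1 p.1.1, a.1 '' p.1.2))⁻¹} ∪
  {r | ∃ (a : IsoPerm G) (p : OutOdd G),
    r = FreeGroup.of (Sum.inr (Sum.inl a)) * FreeGroup.of (Sum.inl (Sum.inr p)) *
        (FreeGroup.of (Sum.inr (Sum.inl a)))⁻¹ *
        (wEps2 G (Sym2.map a.1 p.1.1, a.1 '' p.1.2))⁻¹}

noncomputable def pairWord (G : LGraph V) (a b : Equiv.Perm V) : FreeGroup (GenO G) :=
  (((etaFinset G a ∩ etaFinset G b).toList).map (wEps2 G)).prod

def R3 (G : LGraph V) : Set (FreeGroup (GenO G)) :=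
  {r | ∃ a b : IsoPerm G,
    r = wAlpha G a.1 * wAlpha G b.1 * (pairWord G a.1 b.1 * wAlpha G (a.1 * b.1))⁻¹}

noncomputable def EalphaSq (G : LGraph V) (a : Equiv.Perm V) : FreeGroup (GenO G) :=
  ((etaFinset G a).toList.map (wEps2 G)).prod

def R4 (G : LGraph V) : Set (FreeGroup (GenO G)) :=
  {wIota G * wIota G} ∪
  {r | ∃ a : IsoPerm G,
    r = wAlpha G a.1 * wIota G * (EalphaSq G a.1 * wIota G * wAlpha G a.1)⁻¹} ∪
  {r | ∃ w ∈ EpsGenWords G, r = w * wIota G * w * wIota G}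

noncomputable def centerEWord (G : LGraph V) (e : Sym2 V) : FreeGroup (GenO G) :=
  ((Set.toFinite {C : Set V | IsChunk G C ∧ {v | v ∈ e} ⊆ C}).toFinset.toList.map
    (fun C => wEps G (e, C))).prod

def RPhi (G : LGraph V) : Set (FreeGroup (GenO G)) :=
  {r | ∃ (e : Sym2 V) (he : IsSepEdge G e), IsCenter G (Sum.inr ⟨e, he⟩) ∧
    ((Even (G.label e) ∧ r = centerEWord G e) ∨
     (Odd (G.label e) ∧ r = wAlpha G (Equiv.swap (pt1 e) (pt2 e))))}

def ROut (G : LGraph V) : Set (FreeGroup (GenO G)) :=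
  R1 G ∪ R2 G ∪ R3 G ∪ R4 G ∪ RPhi G

def embO (G : LGraph V) : FreeGroup (GenO G) →* FreeGroup (GenA G) :=
  FreeGroup.map Sum.inr

def embV (G : LGraph V) : FreeGroup V →* FreeGroup (GenA G) :=
  FreeGroup.map Sum.inl

def R0 (G : LGraph V) : Set (FreeGroup (GenA G)) :=
  (embV G '' artinRels G) ∪
  {r | ∃ (g : GenO G) (v : V),
    r = FreeGroup.of (Sum.inr g) * FreeGroup.of (Sum.inl v) *
        (FreeGroup.of (Sum.inr g))⁻¹ * (embV G (genActWord G g v))⁻¹}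

def RtPhi (G : LGraph V) : Set (FreeGroup (GenA G)) :=
  {r | ∃ (e : Sym2 V) (he : IsSepEdge G e), IsCenter G (Sum.inr ⟨e, he⟩) ∧
    ((Even (G.label e) ∧ r = embO G (centerEWord G e) * (embV G (xeF G e))⁻¹) ∨
     (Odd (G.label e) ∧
       r = embO G (wAlpha G (Equiv.swap (pt1 e) (pt2 e))) * (embV G (xeF G e))⁻¹))}

def RAut (G : LGraph V) : Set (FreeGroup (GenA G)) :=
  R0 G ∪ (embO G '' (R1 G ∪ R2 G ∪ R3 G ∪ R4 G)) ∪ RtPhi G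

noncomputable def artinMk (G : LGraph V) : FreeGroup V →* ArtinGroup G :=
  QuotientGroup.mk' (Subgroup.normalClosure (artinRels G))

end CLTTF

/-!
Fix a separating edge `g` and a component `K` of `G - g`. A vertex `a ∈ K` is *pendant* if another
separating edge `k` cuts it off from `g`; its *pocket* is then its component in `G - k`, a subset of
`K`. The non-pendant vertices of `K` together with `g` form a connected indecomposable set, the
*core*, so they lie in one chunk `D`. Among the edges cutting off a pendant vertex, one with the
largest pocket has both ends in the core: were an end cut off in turn, its pocket would be strictly
larger. So the rest of `K` is covered by pockets strictly smaller than `K`, bounded by separating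
edges inside `D`, and induction on `|K|` joins every chunk meeting `K` to `g` in the chunk graph.

Two chunks through `g` meeting the same component of `G - g` coincide, and two adjacent vertices of
the chunk graph other than `g` share a vertex off `g`, hence sit on the same side of `g`. So no path
from `g` to a chunk `C ∋ g` avoids the edge `gC`: every edge is a bridge. Since `g` has at least two
sides, each containing a chunk through `g`, the leaves are chunks.
-/

namespace SimpleGraph

variable {W : Type*} {H K : SimpleGraph W} {S T A : Set W} {x y u : W}

def within (H : SimpleGraph W) (S : Set W) : SimpleGraph W where
  Adj x y := x ∈ S ∧ y ∈ S ∧ H.Adj x y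
  symm := ⟨fun _ _ h => ⟨h.2.1, h.1, h.2.2.symm⟩⟩
  loopless := ⟨fun _ h => h.2.2.ne rfl⟩

lemma within_mono (h : S ⊆ T) : H.within S ≤ H.within T :=
  fun _ _ hxy => ⟨h hxy.1, h hxy.2.1, hxy.2.2⟩

lemma Reachable.mem_of_within (h : (H.within S).Reachable x y) (hx : x ∈ S) : y ∈ S := by
  rw [reachable_iff_reflTransGen] at h
  induction h with
  | refl => exact hx
  | tail _ hbc _ => exact hbc.2.1

lemma Reachable.exists_adj_of_mem_of_notMem (h : K.Reachable x y) (hx : x ∈ A) (hy : y ∉ A) :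
    ∃ a ∈ A, ∃ b ∉ A, K.Adj a b := by
  obtain ⟨d, -, hd⟩ := h.some.exists_boundary_dart A hx hy
  exact ⟨_, hd.1, _, hd.2, d.adj⟩

lemma Reachable.within_setOf (h : (H.within S).Reachable x y) :
    (H.within {z | (H.within S).Reachable x z}).Reachable x y := by
  have h' := h
  rw [reachable_iff_reflTransGen] at h'
  induction h' with
  | refl => rfl
  | @tail b c hxb hbc ih =>
    have hb : (H.within S).Reachable x b := (reachable_iff_reflTransGen _ _).2 hxb
    exact (ih hb).trans (Adj.reachable ⟨hb, hb.trans hbc.reachable, hbc.2.2⟩)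

lemma Reachable.induce_of_within (h : (H.within S).Reachable x y) (hx : x ∈ S) (hy : y ∈ S) :
    (H.induce S).Reachable ⟨x, hx⟩ ⟨y, hy⟩ := by
  rw [reachable_iff_reflTransGen] at h
  induction h with
  | refl => rfl
  | @tail b c _ hbc ih => exact (ih hbc.1).trans (Adj.reachable (G := H.induce S) hbc.2.2)

lemma induce_connected_of_forall_reachable_within (hu : u ∈ S)
    (h : ∀ v ∈ S, (H.within S).Reachable v u) : (H.induce S).Connected :=
  (connected_iff_exists_forall_reachable _).2
    ⟨⟨u, hu⟩, fun ⟨v, hv⟩ => ((h v hv).induce_of_within hv hu).symm⟩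

lemma isBridge_of_invariant (P : W → Prop) (hxy : x ≠ y) (hx : ∀ z, K.Adj x z → z ≠ y → P z)
    (hstep : ∀ z z', z ≠ x → z' ≠ x → K.Adj z z' → P z → P z') (hy : ¬ P y) :
    K.IsBridge s(x, y) := by
  rw [isBridge_iff, reachable_iff_reflTransGen]
  suffices ∀ z, Relation.ReflTransGen (K.deleteEdges {s(x, y)}).Adj x z → z = x ∨ P z by
    exact fun h => (this y h).elim hxy.symm hy
  intro z h
  induction h with
  | refl => exact Or.inl rfl
  | @tail b c _ hbc ih =>
    rw [deleteEdges_adj, Set.mem_singleton_iff] at hbc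
    by_cases hc : c = x
    · exact Or.inl hc
    by_cases hb : b = x
    · subst hb
      exact Or.inr (hx c hbc.1 fun hcy => hbc.2 (by rw [hcy]))
    · exact Or.inr (hstep b c hb hc hbc.1 (ih.resolve_left hb))

end SimpleGraph

lemma Sym2.exists_mem_notMem_of_ne {α : Type*} {e f : Sym2 α} (he : ¬ e.IsDiag) (hne : e ≠ f) :
    ∃ t ∈ e, t ∉ f := by
  induction e with
  | _ a b =>
    by_contra! h
    exact hne ((Sym2.mem_and_mem_iff (by simpa using he)).1
      ⟨h a (Sym2.mem_mk_left a b), h b (Sym2.mem_mk_right a b)⟩).symm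

namespace CLTTF

open SimpleGraph

variable {V : Type} {G : LGraph V} {S S₀ S₁ S₂ C D : Set V} {e g k k' : Sym2 V} {x y z a b w : V}

lemma adj_of_mem_edges (he : e ∈ G.edges) (hx : x ∈ e) (hy : y ∈ e) (hxy : x ≠ y) :
    G.toSimple.Adj x y :=
  ⟨hxy, by rwa [← (Sym2.mem_and_mem_iff hxy).1 ⟨hx, hy⟩]⟩

section Decomposition

lemma IsDecomp.symm (hd : IsDecomp G S₀ S₁ S₂) : IsDecomp G S₀ S₂ S₁ :=
  ⟨by rw [Set.union_comm, hd.union_eq], by rw [Set.inter_comm, hd.inter_eq], hd.ne₂, hd.ne₁,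
    fun e he => (hd.edge_cond e he).symm⟩

lemma IsDecomp.subset_left (hd : IsDecomp G S₀ S₁ S₂) : S₀ ⊆ S₁ :=
  hd.inter_eq ▸ Set.inter_subset_left

lemma IsDecomp.mem_of_reachable (hd : IsDecomp G S₀ S₁ S₂) (hx : x ∈ S₁)
    (h : (G.toSimple.within S₀ᶜ).Reachable x y) : y ∈ S₁ := by
  rw [reachable_iff_reflTransGen] at h
  induction h with
  | refl => exact hx
  | @tail b c _ hbc hb =>
    obtain ⟨hb₀, -, -, hedge⟩ := hbc
    refine (hd.edge_cond _ hedge).elim (fun h => h c (Sym2.mem_mk_right b c)) fun h => ?_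
    exact absurd (hd.inter_eq ▸ ⟨hb, h b (Sym2.mem_mk_left b c)⟩ : b ∈ S₀) hb₀

lemma IsDecomp.not_reachable (hd : IsDecomp G S₀ S₁ S₂) (hx : x ∈ S₁) (hy : y ∈ S₂)
    (hy₀ : y ∉ S₀) : ¬ (G.toSimple.within S₀ᶜ).Reachable x y :=
  fun h => hy₀ (hd.inter_eq ▸ ⟨hd.mem_of_reachable hx h, hy⟩)

lemma isDecomp_of_not_reachable (hx : x ∉ S₀) (hy : y ∉ S₀)
    (h : ¬ (G.toSimple.within S₀ᶜ).Reachable x y) :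
    IsDecomp G S₀ ({z | (G.toSimple.within S₀ᶜ).Reachable x z} ∪ S₀)
      {z | (G.toSimple.within S₀ᶜ).Reachable x z}ᶜ := by
  set K := {z | (G.toSimple.within S₀ᶜ).Reachable x z}
  have hK : ∀ z ∈ K, z ∉ S₀ := fun z hz => Reachable.mem_of_within hz hx
  refine ⟨?_, ?_, fun h' => hx (h' ▸ Or.inl (Reachable.refl x)), fun h' => hy (h' ▸ h), ?_⟩
  · rw [Set.union_right_comm, Set.union_compl_self, Set.univ_union]
  · ext z
    exact ⟨fun ⟨hz, hzK⟩ => hz.resolve_left hzK, fun hz => ⟨Or.inr hz, fun hzK => hK z hzK hz⟩⟩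
  · intro e he
    by_cases hmeet : ∃ v ∈ e, v ∈ K
    · obtain ⟨v, hv, hvK⟩ := hmeet
      refine Or.inl fun w hw => ?_
      by_cases hw₀ : w ∈ S₀
      · exact Or.inr hw₀
      by_cases hvw : v = w
      · exact Or.inl (hvw ▸ hvK)
      exact Or.inl (Reachable.trans hvK
        (Adj.reachable ⟨hK v hvK, hw₀, adj_of_mem_edges he hv hw hvw⟩))
    · push Not at hmeet
      exact Or.inr hmeet

lemma EdgeSeparated.reachable (hES : EdgeSeparated G) {v : V} (hx : x ≠ v) (hy : y ≠ v) :
    (G.toSimple.within {v}ᶜ).Reachable x y := by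
  by_contra h
  exact hES ⟨v, _, _, isDecomp_of_not_reachable hx hy h⟩

lemma IsSepEdge.not_isDiag (hES : EdgeSeparated G) (he : IsSepEdge G e) : ¬ e.IsDiag := by
  induction e with
  | _ a b =>
    rintro (rfl : a = b)
    obtain ⟨-, S₁, S₂, hd⟩ := he
    exact hES ⟨a, S₁, S₂, by simpa using hd⟩

lemma IsSepEdge.exists_not_reachable (he : IsSepEdge G e) :
    ∃ x y, x ∉ e ∧ y ∉ e ∧ ¬ (G.toSimple.within (e : Set V)ᶜ).Reachable x y := by
  obtain ⟨-, S₁, S₂, hd⟩ := he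
  obtain ⟨x, hx, hxe⟩ := Set.exists_of_ssubset (hd.subset_left.ssubset_of_ne hd.ne₁.symm)
  obtain ⟨y, hy, hye⟩ := Set.exists_of_ssubset (hd.symm.subset_left.ssubset_of_ne hd.ne₂.symm)
  exact ⟨x, y, hxe, hye, hd.not_reachable hx hy hye⟩

lemma Indecomposable.reachable (hS : Indecomposable G S) (he : IsSepEdge G e) (hx : x ∈ S)
    (hy : y ∈ S) (hxe : x ∉ e) (hye : y ∉ e) :
    (G.toSimple.within (e : Set V)ᶜ).Reachable x y := by
  by_contra h
  rcases hS e he.1 _ _ (isDecomp_of_not_reachable hxe hye h) with h' | h'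
  · exact h ((h' hy).resolve_right hye)
  · exact h' hx (Reachable.refl x)

lemma indecomposable_of_reachable (h : ∀ e, IsSepEdge G e → ∀ x ∈ S, ∀ y ∈ S, x ∉ e → y ∉ e →
    (G.toSimple.within (e : Set V)ᶜ).Reachable x y) : Indecomposable G S := by
  intro e he S₁ S₂ hd
  by_cases hSe : S ⊆ e
  · exact Or.inl (hSe.trans hd.subset_left)
  obtain ⟨x, hxS, hxe⟩ := Set.not_subset.1 hSe
  have key : ∀ {T₁ T₂}, IsDecomp G {v | v ∈ e} T₁ T₂ → x ∈ T₁ → S ⊆ T₁ := fun hT hxT y hy => by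
    by_cases hye : y ∈ e
    · exact hT.subset_left hye
    · exact hT.mem_of_reachable hxT (h e ⟨he, S₁, S₂, hd⟩ x hxS y hy hxe hye)
  exact ((hd.union_eq ▸ Set.mem_univ x : x ∈ S₁ ∪ S₂)).imp (key hd) (key hd.symm)

end Decomposition

section Components

def reachSet (G : LGraph V) (S : Set V) (x : V) : Set V :=
  {y | (G.toSimple.within S).Reachable x y}

lemma mem_reachSet_self : x ∈ reachSet G S x := Reachable.refl x

lemma reachSet_subset_of_mem (hx : x ∈ S) : reachSet G S x ⊆ S :=
  fun _ hy => Reachable.mem_of_within hy hx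

lemma mem_reachSet_of_adj (hy : y ∈ reachSet G S x) (hyS : y ∈ S) (hz : z ∈ S)
    (hyz : G.toSimple.Adj y z) : z ∈ reachSet G S x :=
  Reachable.trans hy (Adj.reachable ⟨hyS, hz, hyz⟩)

/-- Otherwise the other end of `e` would be a separating vertex. -/
lemma exists_adj_mem_reachSet (hES : EdgeSeparated G) (hd : ¬ e.IsDiag) {u : V} (hu : u ∈ e)
    (hx : x ∉ e) : ∃ z ∈ reachSet G (e : Set V)ᶜ x, G.toSimple.Adj u z := by
  obtain ⟨w, rfl⟩ := Sym2.mem_iff_exists.1 hu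
  have huw : u ≠ w := by simpa using hd
  have hxu : x ≠ u := fun h => hx (h ▸ Sym2.mem_mk_left u w)
  have hxw : x ≠ w := fun h => hx (h ▸ Sym2.mem_mk_right u w)
  obtain ⟨a, ha, b, hb, hab⟩ := (hES.reachable hxw huw).exists_adj_of_mem_of_notMem
    (A := reachSet G (s(u, w) : Set V)ᶜ x) mem_reachSet_self
    fun h => reachSet_subset_of_mem hx h (Sym2.mem_mk_left u w)
  have hbe : b ∈ s(u, w) := by
    by_contra hbe
    exact hb (mem_reachSet_of_adj ha (reachSet_subset_of_mem hx ha) hbe hab.2.2)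
  obtain rfl : b = u := (Sym2.mem_iff.1 hbe).resolve_right hab.2.1
  exact ⟨a, ha, hab.2.2.symm⟩

/-- The component of `y` in `G - e` avoids the component of `a` and is attached to `w`. -/
lemma reachable_compl_reachSet_union (hES : EdgeSeparated G) {u : V} (hu : u ∈ e) (hw : w ∈ e)
    (huw : u ≠ w) (ha : a ∉ e) (hy : y ∉ reachSet G (e : Set V)ᶜ a ∪ {u}) :
    (G.toSimple.within (reachSet G (e : Set V)ᶜ a ∪ {u})ᶜ).Reachable y w := by
  have he : e = s(u, w) := (Sym2.mem_and_mem_iff huw).1 ⟨hu, hw⟩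
  have hd : ¬ e.IsDiag := by simpa [he] using huw
  have hwκ : w ∉ reachSet G (e : Set V)ᶜ a ∪ {u} := fun h =>
    h.elim (fun h => reachSet_subset_of_mem ha h hw) fun h => huw (Set.mem_singleton_iff.1 h).symm
  by_cases hyw : y = w
  · exact hyw ▸ Reachable.refl y
  have hye : y ∉ e := by
    rw [he, Sym2.mem_iff]
    rintro (rfl | rfl)
    exacts [hy (Or.inr rfl), hyw rfl]
  have hχ : reachSet G (e : Set V)ᶜ y ⊆ (reachSet G (e : Set V)ᶜ a ∪ {u})ᶜ := by
    rintro v hv (hvκ | rfl)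
    · exact hy (Or.inl (Reachable.trans hvκ hv.symm))
    · exact reachSet_subset_of_mem hye hv hu
  obtain ⟨z, hz, hwz⟩ := exists_adj_mem_reachSet hES hd hw hye
  exact ((Reachable.within_setOf hz).mono (within_mono hχ)).trans
    (Adj.reachable ⟨hχ hz, hwκ, hwz.symm⟩)

end Components

section Core

def CutOff (G : LGraph V) (k g : Sym2 V) (a : V) : Prop :=
  a ∉ k ∧ ∀ s ∈ g, s ∉ k → ¬ (G.toSimple.within (k : Set V)ᶜ).Reachable a s

def Pendant (G : LGraph V) (g : Sym2 V) (a : V) : Prop :=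
  ∃ k, IsSepEdge G k ∧ k ≠ g ∧ CutOff G k g a

/-- The candidate for the chunk through `g` on the side of `x`. -/
def core (G : LGraph V) (g : Sym2 V) (x : V) : Set V :=
  (g : Set V) ∪ {a | a ∈ reachSet G (g : Set V)ᶜ x ∧ ¬ Pendant G g a}

lemma CutOff.of_reachable (h : CutOff G k g a)
    (hay : (G.toSimple.within (k : Set V)ᶜ).Reachable a y) : CutOff G k g y :=
  ⟨Reachable.mem_of_within hay h.1, fun s hs hsk hys => h.2 s hs hsk (hay.trans hys)⟩

lemma CutOff.notMem_of_mem_reachSet (h : CutOff G k g a) (hz : z ∈ reachSet G (k : Set V)ᶜ a) :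
    z ∉ g :=
  fun hzg => h.2 z hzg (Reachable.mem_of_within hz h.1) hz

lemma CutOff.reachSet_subset (h : CutOff G k g a) (ha : a ∈ reachSet G (g : Set V)ᶜ x) :
    reachSet G (k : Set V)ᶜ a ⊆ reachSet G (g : Set V)ᶜ x := fun _ hz =>
  Reachable.trans ha ((Reachable.within_setOf hz).mono
    (within_mono fun _ hv => h.notMem_of_mem_reachSet hv))

lemma CutOff.subset_reachSet_union (hES : EdgeSeparated G) (hk : IsSepEdge G k)
    (h : CutOff G k g a) (ha : a ∈ reachSet G (g : Set V)ᶜ x) :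
    (k : Set V) ⊆ reachSet G (g : Set V)ᶜ x ∪ g := by
  intro v hv
  by_cases hvg : v ∈ g
  · exact Or.inr hvg
  obtain ⟨z, hz, hvz⟩ := exists_adj_mem_reachSet hES (hk.not_isDiag hES) hv h.1
  exact Or.inl (mem_reachSet_of_adj (h.reachSet_subset ha hz) (h.notMem_of_mem_reachSet hz)
    hvg hvz.symm)

/-- If `k'` avoids the pocket of `a`, that pocket hangs off `w` and lies beyond `k'`. Otherwise `k'`
has an end in the pocket, so lies in the pocket plus the other end `u` of `k`, and `w` reaches `g`
around them. -/
lemma CutOff.reachSet_ssubset (hES : EdgeSeparated G) (hg : IsSepEdge G g) (hk : IsSepEdge G k)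
    (h : CutOff G k g a) (hwk : w ∈ k) (hk' : k' ∈ G.edges) (h' : CutOff G k' g w) :
    reachSet G (k : Set V)ᶜ a ⊂ reachSet G (k' : Set V)ᶜ w := by
  set κ := reachSet G (k : Set V)ᶜ a
  have hwκ : w ∉ κ := fun hw => reachSet_subset_of_mem h.1 hw hwk
  by_cases hκ : ∀ z ∈ κ, z ∉ k'
  · obtain ⟨z₀, hz₀, hwz₀⟩ := exists_adj_mem_reachSet hES (hk.not_isDiag hES) hwk h.1
    refine ⟨fun z hz => ?_, fun hsub => hwκ (hsub mem_reachSet_self)⟩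
    have hz₀z : (G.toSimple.within κ).Reachable z₀ z :=
      (Reachable.within_setOf hz₀).symm.trans (Reachable.within_setOf hz)
    exact (Adj.reachable (G := G.toSimple.within (k' : Set V)ᶜ) ⟨h'.1, hκ z₀ hz₀, hwz₀⟩).trans
      (hz₀z.mono (within_mono hκ))
  push Not at hκ
  obtain ⟨u₃, hu₃κ, hu₃k'⟩ := hκ
  obtain ⟨u, rfl⟩ := Sym2.mem_iff_exists.1 hwk
  have huw : w ≠ u := by simpa using hk.not_isDiag hES
  have hk'sub : (k' : Set V) ⊆ κ ∪ {u} := by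
    intro v hv
    by_cases hvu₃ : v = u₃
    · exact Or.inl (hvu₃ ▸ hu₃κ)
    by_cases hvk : v ∈ s(w, u)
    · rcases Sym2.mem_iff.1 hvk with rfl | rfl
      exacts [absurd hv h'.1, Or.inr rfl]
    exact Or.inl (mem_reachSet_of_adj hu₃κ (reachSet_subset_of_mem h.1 hu₃κ) hvk
      (adj_of_mem_edges hk' hu₃k' hv (Ne.symm hvu₃)))
  obtain ⟨s₀, hs₀g, hs₀u⟩ := Sym2.exists_mem_notMem_of_ne (hg.not_isDiag hES)
    (show g ≠ s(u, u) from fun hgu => hg.not_isDiag hES (hgu ▸ Sym2.mk_isDiag_iff.2 rfl))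
  have hs₀ : s₀ ∉ κ ∪ {u} := fun hs₀ => hs₀.elim (h.notMem_of_mem_reachSet · hs₀g)
    fun hs₀ => hs₀u (by rw [Set.mem_singleton_iff.1 hs₀]; exact Sym2.mem_mk_left u u)
  have hreach := reachable_compl_reachSet_union hES (Sym2.mem_mk_right w u) hwk huw.symm h.1 hs₀
  exact absurd ((hreach.mono (within_mono (Set.compl_subset_compl.2 hk'sub))).symm)
    (h'.2 s₀ hs₀g fun hs₀k' => hs₀ (hk'sub hs₀k'))

lemma exists_cutOff_subset_core [Finite V] (hES : EdgeSeparated G) (hg : IsSepEdge G g)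
    (hy : y ∈ reachSet G (g : Set V)ᶜ x) (hpy : Pendant G g y) :
    ∃ k, IsSepEdge G k ∧ k ≠ g ∧ CutOff G k g y ∧ (k : Set V) ⊆ core G g x := by
  obtain ⟨k, ⟨hk, hkg, hky⟩, hmax⟩ := Set.Finite.exists_maximalFor
    (fun k : Sym2 V => (reachSet G (k : Set V)ᶜ y).ncard)
    {k | IsSepEdge G k ∧ k ≠ g ∧ CutOff G k g y} (Set.toFinite _) hpy
  refine ⟨k, hk, hkg, hky, fun v hv => ?_⟩
  by_cases hvg : v ∈ g
  · exact Or.inl hvg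
  refine Or.inr ⟨(hky.subset_reachSet_union hES hk hy hv).resolve_right hvg, ?_⟩
  rintro ⟨k', hk', hk'g, hk'v⟩
  have hss := hky.reachSet_ssubset hES hg hk hv hk'.1 hk'v
  have hvy : (G.toSimple.within (k' : Set V)ᶜ).Reachable v y := hss.1 mem_reachSet_self
  have hlt := (Set.ncard_lt_ncard hss).trans_le
    (Set.ncard_le_ncard fun _ hz => Reachable.trans hvy.symm hz)
  exact hlt.not_ge (hmax ⟨hk', hk'g, hk'v.of_reachable hvy⟩ hlt.le)

lemma not_cutOff_of_mem_core (hz : z ∈ core G g x) (hk : IsSepEdge G k) (hkg : k ≠ g) :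
    ¬ CutOff G k g z := by
  intro hkz
  rcases hz with hzg | ⟨-, hzp⟩
  · exact hkz.2 z hzg hkz.1 (Reachable.refl z)
  · exact hzp ⟨k, hk, hkg, hkz⟩

lemma mem_of_adj_of_cutOff (hz : z ∈ core G g x) (hk : IsSepEdge G k) (hkg : k ≠ g)
    (hy : CutOff G k g y) (hzy : G.toSimple.Adj z y) : z ∈ k := by
  by_contra hzk
  exact not_cutOff_of_mem_core hz hk hkg (hy.of_reachable (Adj.reachable ⟨hy.1, hzk, hzy.symm⟩))

lemma core_indecomposable (hES : EdgeSeparated G) (hg : IsSepEdge G g) :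
    Indecomposable G (core G g x) := by
  refine indecomposable_of_reachable fun k hk => ?_
  by_cases hkg : k = g
  · subst hkg
    have hx : ∀ c ∈ core G k x, c ∉ k → (G.toSimple.within (k : Set V)ᶜ).Reachable x c :=
      fun c hc hck => (hc.resolve_left hck).1
    exact fun c hc d hd hck hdk => (hx c hc hck).symm.trans (hx d hd hdk)
  obtain ⟨t, htg, htk⟩ := Sym2.exists_mem_notMem_of_ne (hg.not_isDiag hES) (Ne.symm hkg)
  have hg_t : ∀ s ∈ g, s ∉ k → (G.toSimple.within (k : Set V)ᶜ).Reachable s t := fun s hs hsk => by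
    by_cases hst : s = t
    · exact hst ▸ Reachable.refl s
    · exact Adj.reachable ⟨hsk, htk, adj_of_mem_edges hg.1 hs htg hst⟩
  have hc_t : ∀ c ∈ core G g x, c ∉ k → (G.toSimple.within (k : Set V)ᶜ).Reachable c t := by
    intro c hc hck
    rcases hc with hcg | hc
    · exact hg_t c hcg hck
    have hcut := not_cutOff_of_mem_core (Or.inr hc) hk hkg
    simp only [CutOff, hck, not_false_eq_true, true_and, not_forall, not_not] at hcut
    obtain ⟨s, hs, hsk, hcs⟩ := hcut
    exact hcs.trans (hg_t s hs hsk)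
  exact fun c hc d hd hck hdk => (hc_t c hc hck).trans (hc_t d hd hdk).symm

lemma core_reachable_of_reachable [Finite V] (hES : EdgeSeparated G) (hg : IsSepEdge G g) {p : V}
    (hp : p ∈ g) (h : (G.toSimple.within (reachSet G (g : Set V)ᶜ x ∪ {p})).Reachable y p) :
    (y ∈ core G g x → (G.toSimple.within (core G g x)).Reachable y p) ∧
    (y ∉ core G g x → ∃ k, IsSepEdge G k ∧ k ≠ g ∧ CutOff G k g y ∧
      ∀ t ∈ k, t ∈ core G g x ∧ (G.toSimple.within (core G g x)).Reachable t p) := by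
  rw [reachable_iff_reflTransGen] at h
  induction h using Relation.ReflTransGen.head_induction_on with
  | refl => exact ⟨fun _ => Reachable.refl p, fun hp' => absurd (Or.inl hp) hp'⟩
  | @head y y' hyy' _ ih =>
    obtain ⟨hy, -, hadj⟩ := hyy'
    by_cases hyc : y ∈ core G g x <;> by_cases hy'c : y' ∈ core G g x
    · exact ⟨fun _ => (Adj.reachable (G := G.toSimple.within (core G g x)) ⟨hyc, hy'c, hadj⟩).trans
        (ih.1 hy'c), absurd hyc⟩
    · obtain ⟨k, hk, hkg, hky', hkt⟩ := ih.2 hy'c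
      exact ⟨fun _ => (hkt y (mem_of_adj_of_cutOff hyc hk hkg hky' hadj)).2, absurd hyc⟩
    · refine ⟨fun h => absurd h hyc, fun _ => ?_⟩
      have hyA : y ∈ reachSet G (g : Set V)ᶜ x :=
        hy.resolve_right fun h => hyc (Or.inl (Set.mem_singleton_iff.1 h ▸ hp))
      have hpy : Pendant G g y := by_contra fun h => hyc (Or.inr ⟨hyA, h⟩)
      obtain ⟨k, hk, hkg, hky, hkc⟩ := exists_cutOff_subset_core hES hg hyA hpy
      have hy'k := mem_of_adj_of_cutOff hy'c hk hkg hky hadj.symm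
      refine ⟨k, hk, hkg, hky, fun t ht => ⟨hkc ht, ?_⟩⟩
      by_cases hty' : t = y'
      · exact hty' ▸ ih.1 hy'c
      · exact (Adj.reachable (G := G.toSimple.within (core G g x))
          ⟨hkc ht, hy'c, adj_of_mem_edges hk.1 ht hy'k hty'⟩).trans (ih.1 hy'c)
    · refine ⟨fun h => absurd h hyc, fun _ => ?_⟩
      obtain ⟨k, hk, hkg, hky', hkt⟩ := ih.2 hy'c
      have hyk : y ∉ k := fun hyk => hyc (hkt y hyk).1
      exact ⟨k, hk, hkg, hky'.of_reachable (Adj.reachable ⟨hky'.1, hyk, hadj.symm⟩), hkt⟩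

lemma core_connected [Finite V] (hES : EdgeSeparated G) (hg : IsSepEdge G g) (hx : x ∉ g) :
    ConnFull G (core G g x) := by
  obtain ⟨p, hp⟩ : ∃ p, p ∈ g := ⟨_, Sym2.out_fst_mem g⟩
  refine induce_connected_of_forall_reachable_within (Or.inl hp) fun c hc => ?_
  rcases hc with hcg | ⟨hcA, hcp⟩
  · by_cases hcp : c = p
    · exact hcp ▸ Reachable.refl c
    · exact Adj.reachable ⟨Or.inl hcg, Or.inl hp, adj_of_mem_edges hg.1 hcg hp hcp⟩
  obtain ⟨z, hzA, hpz⟩ := exists_adj_mem_reachSet hES (hg.not_isDiag hES) hp hx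
  have hcz : (G.toSimple.within (reachSet G (g : Set V)ᶜ x)).Reachable c z :=
    (Reachable.within_setOf hcA).symm.trans (Reachable.within_setOf hzA)
  have hcp' : (G.toSimple.within (reachSet G (g : Set V)ᶜ x ∪ {p})).Reachable c p :=
    (hcz.mono (within_mono Set.subset_union_left)).trans
      (Adj.reachable ⟨Or.inl hzA, Or.inr (Set.mem_singleton _), hpz.symm⟩)
  exact (core_reachable_of_reachable hES hg hp hcp').1 (Or.inr ⟨hcA, hcp⟩)

end Core

section Chunks

lemma exists_isChunk_superset [Finite V] (hc : ConnFull G S) (hi : Indecomposable G S) :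
    ∃ C, IsChunk G C ∧ S ⊆ C := by
  obtain ⟨C, ⟨hCc, hCi, hSC⟩, hmax⟩ := Set.Finite.exists_maximalFor id
    {T | ConnFull G T ∧ Indecomposable G T ∧ S ⊆ T} (Set.toFinite _) ⟨S, hc, hi, subset_rfl⟩
  exact ⟨C, ⟨hCc, hCi, fun T hT hTi hCT => hCT.antisymm (hmax ⟨hT, hTi, hSC.trans hCT⟩ hCT)⟩, hSC⟩

lemma exists_isChunk_superset_core [Finite V] (hES : EdgeSeparated G) (hg : IsSepEdge G g)
    (hx : x ∉ g) : ∃ D, IsChunk G D ∧ core G g x ⊆ D :=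
  exists_isChunk_superset (core_connected hES hg hx) (core_indecomposable hES hg)

lemma IsSepEdge.exists_isChunk_inter_reachSet [Finite V] (hES : EdgeSeparated G)
    (hg : IsSepEdge G g) (hx : x ∉ g) :
    ∃ D, IsChunk G D ∧ (g : Set V) ⊆ D ∧ (D ∩ reachSet G (g : Set V)ᶜ x).Nonempty := by
  obtain ⟨D, hD, hcore⟩ := exists_isChunk_superset_core hES hg hx
  refine ⟨D, hD, fun v hv => hcore (Or.inl hv), ?_⟩
  by_cases hpx : Pendant G g x
  · obtain ⟨k, hk, hkg, -, hkc⟩ := exists_cutOff_subset_core hES hg mem_reachSet_self hpx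
    obtain ⟨t, htk, htg⟩ := Sym2.exists_mem_notMem_of_ne (hk.not_isDiag hES) hkg
    exact ⟨t, hcore (hkc htk), ((hkc htk).resolve_left htg).1⟩
  · exact ⟨x, hcore (Or.inr ⟨mem_reachSet_self, hpx⟩), mem_reachSet_self⟩

lemma IsChunk.not_subset [Finite V] (hES : EdgeSeparated G) (hC : IsChunk G C)
    (he : IsSepEdge G e) : ¬ C ⊆ e := by
  intro hCe
  obtain ⟨x, -, hx, -⟩ := he.exists_not_reachable
  obtain ⟨D, hD, heD, a, haD, haA⟩ := he.exists_isChunk_inter_reachSet hES hx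
  obtain rfl : C = D := hC.2.2 D hD.1 hD.2.1 (hCe.trans heD)
  exact reachSet_subset_of_mem hx haA (hCe haD)

lemma IsChunk.eq_of_reachable (hES : EdgeSeparated G) (hC : IsChunk G C) (hD : IsChunk G D)
    (he : IsSepEdge G e) (heC : (e : Set V) ⊆ C) (heD : (e : Set V) ⊆ D) (hx : x ∈ C)
    (hxe : x ∉ e) (hy : y ∈ D) (hye : y ∉ e)
    (hxy : (G.toSimple.within (e : Set V)ᶜ).Reachable x y) : C = D := by
  have hbase : ∀ k, IsSepEdge G k → ∃ t, ∀ c ∈ C ∪ D, c ∉ k →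
      (G.toSimple.within (k : Set V)ᶜ).Reachable c t := by
    intro k hk
    by_cases hke : k = e
    · subst hke
      exact ⟨x, fun c hc hck => hc.elim (fun hc => hC.2.1.reachable hk hc hx hck hxe)
        fun hc => (hD.2.1.reachable hk hc hy hck hye).trans hxy.symm⟩
    · obtain ⟨t, hte, htk⟩ := Sym2.exists_mem_notMem_of_ne (he.not_isDiag hES) (Ne.symm hke)
      exact ⟨t, fun c hc hck => hc.elim (fun hc => hC.2.1.reachable hk hc (heC hte) hck htk)
        fun hc => hD.2.1.reachable hk hc (heD hte) hck htk⟩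
  have hind : Indecomposable G (C ∪ D) :=
    indecomposable_of_reachable fun k hk a ha b hb hak hbk => by
      obtain ⟨t, ht⟩ := hbase k hk
      exact (ht a ha hak).trans (ht b hb hbk).symm
  have hte := Sym2.out_fst_mem e
  have hconn : ConnFull G (C ∪ D) :=
    induce_union_connected hC.1.preconnected hD.1.preconnected ⟨_, heC hte, heD hte⟩
  have hCD := hC.2.2 _ hconn hind Set.subset_union_left
  exact (hD.2.2 C hC.1 hC.2.1 (hCD ▸ Set.subset_union_right)).symm

lemma IsSepEdge.exists_isChunk_ne [Finite V] (hES : EdgeSeparated G) (he : IsSepEdge G e) :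
    ∃ C D, IsChunk G C ∧ IsChunk G D ∧ C ≠ D ∧ (e : Set V) ⊆ C ∧ (e : Set V) ⊆ D := by
  obtain ⟨x, y, hx, hy, hxy⟩ := he.exists_not_reachable
  obtain ⟨C, hC, heC, a, haC, hxa⟩ := he.exists_isChunk_inter_reachSet hES hx
  obtain ⟨D, hD, heD, b, hbD, hyb⟩ := he.exists_isChunk_inter_reachSet hES hy
  refine ⟨C, D, hC, hD, ?_, heC, heD⟩
  rintro rfl
  exact hxy (Reachable.trans hxa ((hC.2.1.reachable he haC hbD (reachSet_subset_of_mem hx hxa)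
    (reachSet_subset_of_mem hy hyb)).trans (Reachable.symm hyb)))

end Chunks

section ChunkGraph

lemma chunkGraph_adj_of_subset (hC : IsChunk G C) (he : IsSepEdge G e) (h : (e : Set V) ⊆ C) :
    (chunkGraph G).Adj (Sum.inl ⟨C, hC⟩) (Sum.inr ⟨e, he⟩) :=
  Or.inl ⟨_, _, rfl, rfl, h⟩

theorem reachable_of_inter_reachSet [Finite V] (hES : EdgeSeparated G) {e : Sym2 V}
    (he : IsSepEdge G e) {x : V} (hx : x ∉ e) {C : Set V} (hC : IsChunk G C)
    (hCx : (C ∩ reachSet G (e : Set V)ᶜ x).Nonempty) :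
    (chunkGraph G).Reachable (Sum.inr ⟨e, he⟩) (Sum.inl ⟨C, hC⟩) := by
  obtain ⟨D, hD, hcoreD⟩ := exists_isChunk_superset_core hES he hx
  have heD := (chunkGraph_adj_of_subset hD he fun v hv => hcoreD (Or.inl hv)).symm
  obtain ⟨c₁, hc₁C, hc₁⟩ := hCx
  have hCA : ∀ c ∈ C, c ∉ e → c ∈ reachSet G (e : Set V)ᶜ x := fun c hc hce =>
    Reachable.trans hc₁ (hC.2.1.reachable he hc₁C hc (reachSet_subset_of_mem hx hc₁) hce)
  by_cases hpend : ∃ c ∈ C, c ∉ e ∧ Pendant G e c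
  · obtain ⟨c, hcC, hce, hpc⟩ := hpend
    obtain ⟨k, hk, hke, hkc, hkcore⟩ := exists_cutOff_subset_core hES he (hCA c hcC hce) hpc
    obtain ⟨t, htk, hte⟩ := Sym2.exists_mem_notMem_of_ne (hk.not_isDiag hES) hke
    have hlt : (reachSet G (k : Set V)ᶜ c).ncard < (reachSet G (e : Set V)ᶜ x).ncard :=
      Set.ncard_lt_ncard ⟨hkc.reachSet_subset (hCA c hcC hce),
        fun h => reachSet_subset_of_mem hkc.1 (h ((hkcore htk).resolve_left hte).1) htk⟩
    have hDk := chunkGraph_adj_of_subset hD hk (hkcore.trans hcoreD)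
    exact heD.reachable.trans (hDk.reachable.trans
      (reachable_of_inter_reachSet hES hk hkc.1 hC ⟨c, hcC, mem_reachSet_self⟩))
  · push Not at hpend
    obtain rfl : C = D := hC.2.2 D hD.1 hD.2.1 fun c hc => hcoreD <| by
      by_cases hce : c ∈ e
      exacts [Or.inl hce, Or.inr ⟨hCA c hc hce, hpend c hc hce⟩]
    exact heD.reachable
termination_by (reachSet G (e : Set V)ᶜ x).ncard

theorem chunkGraph_connected [Finite V] (hconn : G.toSimple.Connected) (hES : EdgeSeparated G) :
    (chunkGraph G).Connected := by
  rw [connected_iff_exists_forall_reachable]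
  by_cases hsep : ∃ e, IsSepEdge G e
  · obtain ⟨e, he⟩ := hsep
    have hchunk : ∀ C (hC : IsChunk G C),
        (chunkGraph G).Reachable (Sum.inr ⟨e, he⟩) (Sum.inl ⟨C, hC⟩) := fun C hC => by
      obtain ⟨c, hcC, hce⟩ := Set.not_subset.1 (hC.not_subset hES he)
      exact reachable_of_inter_reachSet hES he hce hC ⟨c, hcC, mem_reachSet_self⟩
    refine ⟨Sum.inr ⟨e, he⟩, ?_⟩
    rintro (⟨C, hC⟩ | ⟨k, hk⟩)
    · exact hchunk C hC
    · obtain ⟨x, -, hx, -⟩ := hk.exists_not_reachable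
      obtain ⟨D, hD, hkD, -⟩ := hk.exists_isChunk_inter_reachSet hES hx
      exact (hchunk D hD).trans (chunkGraph_adj_of_subset hD hk hkD).reachable
  · push Not at hsep
    have huniv : IsChunk G Set.univ := ⟨(induceUnivIso _).connected_iff.2 hconn,
      indecomposable_of_reachable fun e he => absurd he (hsep e),
      fun T _ _ hT => (Set.univ_subset_iff.1 hT).symm⟩
    refine ⟨Sum.inl ⟨_, huniv⟩, ?_⟩
    rintro (⟨C, hC⟩ | ⟨k, hk⟩)
    · obtain rfl := hC.2.2 _ huniv.1 huniv.2.1 (Set.subset_univ C)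
      rfl
    · exact absurd hk (hsep k)

def carrier (G : LGraph V) : ChunkVert G → Set V :=
  Sum.elim (fun C => C.1) (fun e => (e.1 : Set V))

lemma reachable_of_mem_carrier {e : {e : Sym2 V // IsSepEdge G e}} {z : ChunkVert G}
    (ha : a ∈ carrier G z) (hb : b ∈ carrier G z) (hae : a ∉ e.1)
    (hbe : b ∉ e.1) : (G.toSimple.within (e.1 : Set V)ᶜ).Reachable a b := by
  rcases z with ⟨D, hD⟩ | ⟨k, hk⟩
  · exact hD.2.1.reachable e.2 ha hb hae hbe
  · by_cases hab : a = b
    · exact hab ▸ Reachable.refl a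
    · exact Adj.reachable ⟨hae, hbe, adj_of_mem_edges hk.1 ha hb hab⟩

lemma exists_mem_carrier_of_adj (hES : EdgeSeparated G) {e : {e : Sym2 V // IsSepEdge G e}}
    {z z' : ChunkVert G} (hz : z ≠ Sum.inr e) (hz' : z' ≠ Sum.inr e) (h : (chunkGraph G).Adj z z') :
    ∃ t ∈ carrier G z, t ∈ carrier G z' ∧ t ∉ e.1 := by
  rcases h with ⟨C, k, rfl, rfl, hkC⟩ | ⟨C, k, rfl, rfl, hkC⟩
  · obtain ⟨t, htk, hte⟩ := Sym2.exists_mem_notMem_of_ne (k.2.not_isDiag hES)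
      fun h => hz' (congrArg Sum.inr (Subtype.ext h))
    exact ⟨t, hkC htk, htk, hte⟩
  · obtain ⟨t, htk, hte⟩ := Sym2.exists_mem_notMem_of_ne (k.2.not_isDiag hES)
      fun h => hz (congrArg Sum.inr (Subtype.ext h))
    exact ⟨t, htk, hkC htk, hte⟩

theorem chunkGraph_isAcyclic [Finite V] (hES : EdgeSeparated G) : (chunkGraph G).IsAcyclic := by
  rw [isAcyclic_iff_forall_adj_isBridge]
  suffices h : ∀ C e, (e.1 : Set V) ⊆ C.1 → (chunkGraph G).IsBridge s(Sum.inr e, Sum.inl C) by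
    rintro _ _ (⟨C, e, rfl, rfl, hC⟩ | ⟨C, e, rfl, rfl, hC⟩)
    · exact Sym2.eq_swap ▸ h C e hC
    · exact h C e hC
  rintro ⟨C, hC⟩ e heC
  obtain ⟨c₀, hc₀C, hc₀e⟩ := Set.not_subset.1 (hC.not_subset hES e.2)
  -- the vertices lying on another side of `e` than `C`
  refine isBridge_of_invariant (fun z => ∀ a ∈ carrier G z, a ∉ e.1 →
      ¬ (G.toSimple.within (e.1 : Set V)ᶜ).Reachable a c₀) (by simp) ?_ ?_
    fun h => h c₀ hc₀C hc₀e (Reachable.refl c₀)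
  · rintro _ (⟨D, k, h, -⟩ | ⟨D, k, hk, rfl, hkD⟩) hDC a haD hae hac₀
    · exact Sum.inr_ne_inl h
    · obtain rfl := Sum.inr_injective hk
      exact hDC (congrArg Sum.inl (Subtype.ext
        (IsChunk.eq_of_reachable hES D.2 hC e.2 hkD heC haD hae hc₀C hc₀e hac₀)))
  · intro z z' hz hz' hzz' hP a ha hae hac₀
    obtain ⟨t, htz, htz', hte⟩ := exists_mem_carrier_of_adj hES hz hz' hzz'
    exact hP t htz hte ((reachable_of_mem_carrier htz' ha hte hae).trans hac₀)

end ChunkGraph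

end CLTTF

namespace CLTTF

variable {V : Type} [Fintype V] [DecidableEq V]

theorem stmt0_general (G : LGraph V)
    (hG : IsCLTTF G) (hES : EdgeSeparated G) :
    (chunkGraph G).IsTree ∧
      ∀ x : ChunkVert G, (∃! y : ChunkVert G, (chunkGraph G).Adj x y) →
        ∃ C : {S : Set V // IsChunk G S}, x = Sum.inl C := by
  refine ⟨⟨chunkGraph_connected hG.connected hES, chunkGraph_isAcyclic hES⟩, ?_⟩
  rintro (C | ⟨e, he⟩) ⟨y, -, hy⟩
  · exact ⟨C, rfl⟩
  · obtain ⟨C, D, hC, hD, hCD, heC, heD⟩ := he.exists_isChunk_ne hES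
    have hyC := hy _ (chunkGraph_adj_of_subset hC he heC).symm
    have hyD := hy _ (chunkGraph_adj_of_subset hD he heD).symm
    exact absurd (congrArg Subtype.val (Sum.inl_injective (hyC.trans hyD.symm))) hCD

theorem stmt0 (hV : 3 ≤ Fintype.card V) (G : LGraph V)
    (hG : IsCLTTF G) (hES : EdgeSeparated G) :
    (chunkGraph G).IsTree ∧
      ∀ x : ChunkVert G, (∃! y : ChunkVert G, (chunkGraph G).Adj x y) →
        ∃ C : {S : Set V // IsChunk G S}, x = Sum.inl C :=
  stmt0_general G hG hES

end CLTTF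
end

section
/- Let Γ be an edge-separated CLTTF graph that is both rigid and discretely rigid. Then the label m(e) is even for every separating edge e of Γ. -/
/-!
An odd twist along a separating edge `{s, t}` exchanges, for every vertex `v ≠ s, t` on one
side `S₂`, the edges `{v, s}` and `{v, t}`. Rigidity and discrete rigidity force this twist to fix
`Γ`, so such a `v` adjacent to `s` or `t` would be adjacent to both, a triangle. Hence no edge
leaves the nonempty set `S₂ \ {s, t}`, contradicting connectedness.
-/

open scoped Classical

namespace CLTTF

namespace IsDecomp

variable {V : Type} {G : LGraph V} {S₀ S₁ S₂ : Set V}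

lemma subset_right (h : IsDecomp G S₀ S₁ S₂) : S₀ ⊆ S₂ :=
  h.inter_eq ▸ Set.inter_subset_right

lemma exists_mem_right_notMem (h : IsDecomp G S₀ S₁ S₂) : ∃ v ∈ S₂, v ∉ S₀ := by
  by_contra! hcon
  exact h.ne₂ (h.subset_right.antisymm' hcon)

lemma mem_right_of_adj (h : IsDecomp G S₀ S₁ S₂) {a b : V} (ha : a ∈ S₂) (ha₀ : a ∉ S₀)
    (hab : G.toSimple.Adj a b) : b ∈ S₂ := by
  rcases h.edge_cond _ hab.2 with h₁ | h₂
  · exact absurd (h.inter_eq ▸ ⟨h₁ a (Sym2.mem_mk_left a b), ha⟩) ha₀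
  · exact h₂ b (Sym2.mem_mk_right a b)

end IsDecomp

variable {V : Type} [Fintype V] [DecidableEq V]

lemma twMap_mk_fst {s t v : V} {S₂ : Set V} (hv : v ∈ S₂) (hvs : v ≠ s) (hvt : v ≠ t) :
    twMap s t S₂ s(v, s) = s(v, t) := by
  have h : ∃ u, u ∈ S₂ ∧ u ≠ s ∧ u ≠ t ∧ s(v, s) = s(u, s) := ⟨v, hv, hvs, hvt, rfl⟩
  rw [twMap, dif_pos h]
  obtain ⟨-, -, -, heq⟩ := h.choose_spec
  rcases Sym2.eq_iff.mp heq with ⟨hu, -⟩ | ⟨hu, -⟩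
  · rw [← hu]
  · exact absurd hu hvs

lemma twMap_mk_snd {s t v : V} {S₂ : Set V} (hst : s ≠ t) (hv : v ∈ S₂) (hvs : v ≠ s)
    (hvt : v ≠ t) : twMap s t S₂ s(v, t) = s(v, s) := by
  have h₁ : ¬ ∃ u, u ∈ S₂ ∧ u ≠ s ∧ u ≠ t ∧ s(v, t) = s(u, s) := by
    rintro ⟨u, -, -, hut, heq⟩
    rcases Sym2.eq_iff.mp heq with ⟨-, h⟩ | ⟨-, h⟩
    · exact hst h.symm
    · exact hut h.symm
  have h₂ : ∃ u, u ∈ S₂ ∧ u ≠ s ∧ u ≠ t ∧ s(v, t) = s(u, t) := ⟨v, hv, hvs, hvt, rfl⟩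
  rw [twMap, dif_neg h₁, dif_pos h₂]
  obtain ⟨-, -, -, heq⟩ := h₂.choose_spec
  rcases Sym2.eq_iff.mp heq with ⟨hu, -⟩ | ⟨hu, -⟩
  · rw [← hu]
  · exact absurd hu hvt

lemma twist_eq_self_of_rigid {G : LGraph V} (h₁ : Rigid G) (h₂ : DiscretelyRigid G)
    {s t : V} {S₁ S₂ : Set V} (he : s(s, t) ∈ G.edges) (hdec : IsDecomp G {s, t} S₁ S₂) :
    G.twist s t S₂ = G :=
  have hequiv : TwistEquiv G (G.twist s t S₂) := .single ⟨s, t, S₁, S₂, he, hdec, rfl⟩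
  h₂ _ hequiv (h₁ _ hequiv)

lemma mk_notMem_edges_of_twist_eq_self {G : LGraph V} (htri : G.toSimple.CliqueFree 3)
    {s t v : V} {S₂ : Set V} (hst : s ≠ t) (he : s(s, t) ∈ G.edges)
    (hodd : ¬ Even (G.label s(s, t))) (hfix : G.twist s t S₂ = G)
    (hv : v ∈ S₂) (hvs : v ≠ s) (hvt : v ≠ t) :
    s(v, s) ∉ G.edges ∧ s(v, t) ∉ G.edges := by
  have hedges : twMap s t S₂ '' G.edges = G.edges := by
    conv_rhs => rw [← hfix]
    simp only [LGraph.twist, if_neg hodd]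
  have hnot_both : s(v, s) ∈ G.edges → s(v, t) ∉ G.edges := fun hs ht =>
    htri {v, s, t} (SimpleGraph.is3Clique_triple_iff.mpr ⟨⟨hvs, hs⟩, ⟨hvt, ht⟩, ⟨hst, he⟩⟩)
  refine ⟨fun hs => hnot_both hs ?_, fun ht => hnot_both ?_ ht⟩
  · exact hedges ▸ ⟨_, hs, twMap_mk_fst hv hvs hvt⟩
  · exact hedges ▸ ⟨_, ht, twMap_mk_snd hst hv hvs hvt⟩

theorem stmt5_general (G : LGraph V)
    (hG : IsCLTTF G)
    (h1 : Rigid G) (h2 : DiscretelyRigid G) :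
    ∀ e : Sym2 V, IsSepEdge G e → Even (G.label e) := by
  intro e ⟨he, S₁, S₂, hdec⟩
  induction e using Sym2.ind with | _ s t => ?_
  by_contra hodd
  have hst : s ≠ t := by simpa using hG.good.1 _ he
  have hdec' : IsDecomp G {s, t} S₁ S₂ := Sym2.coe_mk ▸ hdec
  have hfix := twist_eq_self_of_rigid h1 h2 he hdec'
  obtain ⟨v, hvS₂, hvst⟩ := hdec'.exists_mem_right_notMem
  obtain ⟨w⟩ := hG.connected.preconnected v s
  obtain ⟨d, -, ⟨hd₁, hd₁st⟩, hd₂⟩ := w.exists_boundary_dart (S₂ \ {s, t}) ⟨hvS₂, hvst⟩ (by simp)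
  have hd₂S₂ : d.snd ∈ S₂ := hdec'.mem_right_of_adj hd₁ hd₁st d.adj
  have hd₁s : d.fst ≠ s := fun h => hd₁st (by simp [h])
  have hd₁t : d.fst ≠ t := fun h => hd₁st (by simp [h])
  have hnot := mk_notMem_edges_of_twist_eq_self hG.triangle_free hst he hodd hfix hd₁ hd₁s hd₁t
  have hd₂st : d.snd ∈ ({s, t} : Set V) := by_contra fun h => hd₂ ⟨hd₂S₂, h⟩
  rcases hd₂st with h | h
  · exact hnot.1 (h ▸ d.adj.2)
  · exact hnot.2 (h ▸ d.adj.2)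

theorem stmt5 (hV : 3 ≤ Fintype.card V) (G : LGraph V)
    (hG : IsCLTTF G) (hES : EdgeSeparated G)
    (h1 : Rigid G) (h2 : DiscretelyRigid G) :
    ∀ e : Sym2 V, IsSepEdge G e → Even (G.label e) :=
  stmt5_general G hG h1 h2

end CLTTF
end
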